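/- A Schröder tree is right-directed if the leftmost child subtree of each of its internal nodes is a leaf. For every n ≥ 0, the number of right-directed Schröder trees of weight n equals the Catalan number C_n. -/

import Mathlib

/-! Binary trees with `n` nodes are in bijection with right-directed Schröder trees with
`n + 1` leaves, by a first-child/next-sibling encoding: `a △ b` becomes the tree whose root has
children `leaf, t₁, t₂, …, tₖ`, where `t₁` encodes `a` and `t₂, …, tₖ` encode the left subtrees
along the right spine of `b`. Forcing the leftmost child to be a leaf is what makes every root have
at least two children, and each binary node contributes exactly one leaf. -/

inductive PTree : Type where
  | node : List PTree → PTree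

mutual
  def leavesT : PTree → ℕ
    | .node [] => 1
    | .node (t :: ts) => leavesT t + leavesL ts
  def leavesL : List PTree → ℕ
    | [] => 0
    | t :: ts => leavesT t + leavesL ts
end

inductive Reduced : PTree → Prop where
  | leaf : Reduced (.node [])
  | node : ∀ ts : List PTree, 2 ≤ ts.length → (∀ t ∈ ts, Reduced t) → Reduced (.node ts)

/-- Right-directed plane trees: the leftmost child subtree of each internal node
is a leaf. -/
inductive RightDirected : PTree → Prop where
  | leaf : RightDirected (.node [])
  | node : ∀ ts : List PTree, ts.head? = some (.node []) →
      (∀ t ∈ ts, RightDirected t) → RightDirected (.node ts)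

namespace BinaryTree

mutual
  def toPTree : BinaryTree Unit → PTree
    | nil => .node []
    | node _ a b => .node (.node [] :: toPTree a :: toForest b)
  def toForest : BinaryTree Unit → List PTree
    | nil => []
    | node _ a b => toPTree a :: toForest b
end

end BinaryTree

namespace PTree

mutual
  def toBinaryTree : PTree → BinaryTree Unit
    | node [] => .nil
    | node (_ :: ts) => forestToBinaryTree ts
  def forestToBinaryTree : List PTree → BinaryTree Unit
    | [] => .nil
    | t :: ts => .node () (toBinaryTree t) (forestToBinaryTree ts)
end

end PTree

open BinaryTree PTree

theorem toBinaryTree_toPTree_eq_forestToBinaryTree_toForest (T : BinaryTree Unit) :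
    T.toPTree.toBinaryTree = forestToBinaryTree T.toForest := by
  cases T <;> rfl

theorem forestToBinaryTree_toForest (T : BinaryTree Unit) :
    forestToBinaryTree T.toForest = T := by
  induction T with
  | nil => rfl
  | node u a b iha ihb =>
    simp only [toForest, forestToBinaryTree,
      toBinaryTree_toPTree_eq_forestToBinaryTree_toForest, iha, ihb]

theorem toBinaryTree_toPTree (T : BinaryTree Unit) : T.toPTree.toBinaryTree = T :=
  (toBinaryTree_toPTree_eq_forestToBinaryTree_toForest T).trans (forestToBinaryTree_toForest T)

theorem toPTree_injective : Function.Injective toPTree :=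
  Function.LeftInverse.injective toBinaryTree_toPTree

mutual
  theorem toPTree_toBinaryTree : ∀ t : PTree, Reduced t → RightDirected t →
      t.toBinaryTree.toPTree = t
    | .node [], _, _ => rfl
    | .node [_], .node _ hlen _, _ => by simp at hlen
    | .node (t₀ :: t₁ :: ts), .node _ _ hred, .node _ hhead hdir => by
      obtain rfl : t₀ = .node [] := by simpa using hhead
      have h₁ := toPTree_toBinaryTree t₁ (hred t₁ (by simp)) (hdir t₁ (by simp))
      have hts := toForest_forestToBinaryTree ts fun t ht =>
        ⟨hred t (by simp [ht]), hdir t (by simp [ht])⟩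
      simp only [toBinaryTree, forestToBinaryTree, toPTree, h₁, hts]
  theorem toForest_forestToBinaryTree : ∀ ts : List PTree,
      (∀ t ∈ ts, Reduced t ∧ RightDirected t) → (forestToBinaryTree ts).toForest = ts
    | [], _ => rfl
    | t :: ts, h => by
      have ht := toPTree_toBinaryTree t (h t (by simp)).1 (h t (by simp)).2
      have hts := toForest_forestToBinaryTree ts fun s hs => h s (by simp [hs])
      simp only [forestToBinaryTree, toForest, ht, hts]
end

theorem leavesT_toPTree (T : BinaryTree Unit) :
    leavesT T.toPTree = leavesL T.toForest + 1 := by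
  cases T with
  | nil => rfl
  | node u a b => simp only [toPTree, leavesT, leavesL, toForest]; omega

theorem leavesL_toForest (T : BinaryTree Unit) : leavesL T.toForest = T.numNodes := by
  induction T with
  | nil => rfl
  | node u a b iha ihb =>
    simp only [toForest, leavesL, leavesT_toPTree, iha, ihb, numNodes]
    omega

theorem reduced_toPTree_and_rightDirected_toPTree {T : BinaryTree Unit}
    (h : ∀ t ∈ T.toForest, Reduced t ∧ RightDirected t) :
    Reduced T.toPTree ∧ RightDirected T.toPTree := by
  cases T with
  | nil => exact ⟨.leaf, .leaf⟩
  | node u a b =>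
    simp only [toForest, List.mem_cons, forall_eq_or_imp] at h
    obtain ⟨⟨hred, hdir⟩, hforest⟩ := h
    refine ⟨.node _ (by simp) ?_, .node _ rfl ?_⟩ <;>
      simp only [List.mem_cons, forall_eq_or_imp]
    · exact ⟨.leaf, hred, fun t ht => (hforest t ht).1⟩
    · exact ⟨.leaf, hdir, fun t ht => (hforest t ht).2⟩

theorem reduced_and_rightDirected_of_mem_toForest (T : BinaryTree Unit) :
    ∀ t ∈ T.toForest, Reduced t ∧ RightDirected t := by
  induction T with
  | nil => simp [toForest]
  | node u a b iha ihb =>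
    simp only [toForest, List.mem_cons, forall_eq_or_imp]
    exact ⟨reduced_toPTree_and_rightDirected_toPTree iha, ihb⟩

theorem setOf_rightDirected_schroder_eq_image (n : ℕ) :
    {t : PTree | Reduced t ∧ RightDirected t ∧ leavesT t = n + 1} =
      toPTree '' {T : BinaryTree Unit | T.numNodes = n} := by
  ext t
  constructor
  · rintro ⟨hred, hdir, hleaves⟩
    refine ⟨t.toBinaryTree, ?_, toPTree_toBinaryTree t hred hdir⟩
    rw [← toPTree_toBinaryTree t hred hdir, leavesT_toPTree, leavesL_toForest] at hleaves
    exact Nat.succ_injective hleaves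
  · rintro ⟨T, rfl, rfl⟩
    obtain ⟨hred, hdir⟩ :=
      reduced_toPTree_and_rightDirected_toPTree (reduced_and_rightDirected_of_mem_toForest T)
    exact ⟨hred, hdir, by rw [leavesT_toPTree, leavesL_toForest]⟩

/-- the number of right-directed Schröder trees of weight `n`
equals the Catalan number `C_n`. -/
theorem stmt16 (n : ℕ) :
    {t : PTree | Reduced t ∧ RightDirected t ∧ leavesT t = n + 1}.ncard = catalan n := by
  have hbinary : {T : BinaryTree Unit | T.numNodes = n} = ↑(treesOfNumNodesEq n) := by
    ext T
    simp
  rw [setOf_rightDirected_schroder_eq_image, Set.ncard_image_of_injective _ toPTree_injective,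
    hbinary, Set.ncard_coe_finset, treesOfNumNodesEq_card_eq_catalan]
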